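/- For real u with 0 < u < 6/5 and u ≠ 1, define a₀(u) := (−3u² + 36u − 36 + √(3(u+2)(6−5u)³)) / (6u²(u−1)). Then a₀(u) = 1 + (u²/12)·a₀(u)² + u·(4/3 − u·a₀(u)) / (12(1−u)) for all such u, and lim_{u→1} a₀(u) = 4/3. -/

import Mathlib

open Real Filter

/-- The coefficient `a₀(u)` of `Z⁰` in the singular expansion of `M(z,u)` at `z = 1/12`. -/
noncomputable def a₀ (u : ℝ) : ℝ :=
  (-3 * u ^ 2 + 36 * u - 36 + Real.sqrt (3 * (u + 2) * (6 - 5 * u) ^ 3))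
    / (6 * u ^ 2 * (u - 1))

/-!
Clearing the denominator `36 (u - 1)`, the coefficient equation becomes the quadratic
`3u²(u-1) a² + (3u² - 36u + 36) a + (32u - 36) = 0`, whose discriminant is exactly
`3(u+2)(6-5u)³`; so `a₀(u)` is its root taken with the `+` sign of the square root.
At `u = 1` both numerator and denominator of `a₀` vanish, but rationalising the root as
`2c / (-b - √Δ)` gives an expression continuous at `u = 1`, with value `-8 / -6 = 4/3`.
-/

theorem quadratic_root_eq_two_mul_div_of_discrim {K : Type*} [Field K] [NeZero (2 : K)]
    {a b c s : K} (ha : a ≠ 0) (hs : discrim a b c = s * s) (hbs : -b - s ≠ 0) :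
    (-b + s) / (2 * a) = 2 * c / (-b - s) := by
  rw [div_eq_div_iff (mul_ne_zero two_ne_zero ha) hbs]
  rw [discrim] at hs
  linear_combination hs

theorem discrim_a₀ (u : ℝ) :
    discrim (3 * u ^ 2 * (u - 1)) (3 * u ^ 2 - 36 * u + 36) (32 * u - 36) =
      3 * (u + 2) * (6 - 5 * u) ^ 3 := by
  rw [discrim]
  ring

theorem discrim_a₀_eq_sqrt_mul_sqrt {u : ℝ} (hu₂ : -2 ≤ u) (hu : u ≤ 6 / 5) :
    discrim (3 * u ^ 2 * (u - 1)) (3 * u ^ 2 - 36 * u + 36) (32 * u - 36) =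
      √(3 * (u + 2) * (6 - 5 * u) ^ 3) * √(3 * (u + 2) * (6 - 5 * u) ^ 3) := by
  rw [discrim_a₀, mul_self_sqrt]
  exact mul_nonneg (mul_nonneg zero_le_three (by linarith)) (pow_nonneg (by linarith) 3)

theorem a₀_eq_quadratic_root (u : ℝ) :
    a₀ u = (-(3 * u ^ 2 - 36 * u + 36) + √(3 * (u + 2) * (6 - 5 * u) ^ 3)) /
      (2 * (3 * u ^ 2 * (u - 1))) := by
  rw [a₀]
  congr 1 <;> ring

theorem three_mul_sq_mul_sub_one_ne_zero {u : ℝ} (hu₀ : u ≠ 0) (hu₁ : u ≠ 1) :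
    3 * u ^ 2 * (u - 1) ≠ 0 := by
  have := sub_ne_zero.2 hu₁
  positivity

theorem a₀_quadratic {u : ℝ} (hu₂ : -2 ≤ u) (hu : u ≤ 6 / 5) (hu₀ : u ≠ 0) (hu₁ : u ≠ 1) :
    3 * u ^ 2 * (u - 1) * (a₀ u * a₀ u) + (3 * u ^ 2 - 36 * u + 36) * a₀ u + (32 * u - 36) = 0 :=
  (quadratic_eq_zero_iff (three_mul_sq_mul_sub_one_ne_zero hu₀ hu₁)
    (discrim_a₀_eq_sqrt_mul_sqrt hu₂ hu) _).2 (Or.inl (a₀_eq_quadratic_root u))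

theorem a₀_coefficient_equation {u : ℝ} (hu₂ : -2 ≤ u) (hu : u ≤ 6 / 5) (hu₀ : u ≠ 0)
    (hu₁ : u ≠ 1) :
    a₀ u = 1 + u ^ 2 / 12 * (a₀ u) ^ 2 + u * (4 / 3 - u * a₀ u) / (12 * (1 - u)) := by
  have hq := a₀_quadratic hu₂ hu hu₀ hu₁
  have : 1 - u ≠ 0 := sub_ne_zero.2 hu₁.symm
  field_simp
  linear_combination hq

theorem a₀_eq_rationalized {u : ℝ} (hu₂ : -2 ≤ u) (hu : u ≤ 6 / 5) (hu₀ : u ≠ 0) (hu₁ : u ≠ 1)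
    (h : -(3 * u ^ 2 - 36 * u + 36) - √(3 * (u + 2) * (6 - 5 * u) ^ 3) ≠ 0) :
    a₀ u = 2 * (32 * u - 36) /
      (-(3 * u ^ 2 - 36 * u + 36) - √(3 * (u + 2) * (6 - 5 * u) ^ 3)) := by
  rw [a₀_eq_quadratic_root]
  exact quadratic_root_eq_two_mul_div_of_discrim (three_mul_sq_mul_sub_one_ne_zero hu₀ hu₁)
    (discrim_a₀_eq_sqrt_mul_sqrt hu₂ hu) h

theorem tendsto_a₀_nhdsNE_one : Tendsto a₀ (nhdsWithin 1 {(1 : ℝ)}ᶜ) (nhds (4 / 3)) := by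
  set g : ℝ → ℝ := fun u => -(3 * u ^ 2 - 36 * u + 36) - √(3 * (u + 2) * (6 - 5 * u) ^ 3)
  have hg : Continuous g := by fun_prop
  have hg₁ : g 1 = -6 := by
    simp only [g, show (3 : ℝ) * (1 + 2) * (6 - 5 * 1) ^ 3 = 3 ^ 2 by norm_num,
      sqrt_sq zero_le_three]
    norm_num
  have hlim : Tendsto (fun u => 2 * (32 * u - 36) / g u) (nhds 1) (nhds (4 / 3)) := by
    have hval : 2 * (32 * 1 - 36) / g 1 = 4 / 3 := by rw [hg₁]; norm_num
    rw [← hval]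
    exact (ContinuousAt.div (by fun_prop) hg.continuousAt (by rw [hg₁]; norm_num)).tendsto
  refine (hlim.mono_left nhdsWithin_le_nhds).congr' ?_
  filter_upwards [self_mem_nhdsWithin,
    nhdsWithin_le_nhds (hg.continuousAt.eventually_ne (by rw [hg₁]; norm_num : g 1 ≠ 0)),
    nhdsWithin_le_nhds (Ioo_mem_nhds (by norm_num : (0 : ℝ) < 1) (by norm_num : (1 : ℝ) < 6 / 5))]
    with u hu₁ hgu hu
  exact (a₀_eq_rationalized (by linarith [hu.1]) hu.2.le hu.1.ne' hu₁ hgu).symm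

theorem a0_equation_and_limit :
    (∀ u : ℝ, 0 < u → u < 6 / 5 → u ≠ 1 →
      a₀ u = 1 + u ^ 2 / 12 * (a₀ u) ^ 2 + u * (4 / 3 - u * a₀ u) / (12 * (1 - u))) ∧
    Filter.Tendsto a₀ (nhdsWithin 1 {(1 : ℝ)}ᶜ) (nhds (4 / 3)) :=
  ⟨fun _ hu₀ hu hu₁ => a₀_coefficient_equation (by linarith) hu.le hu₀.ne' hu₁,
    tendsto_a₀_nhdsNE_one⟩
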